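/- Let S ⊆ ℙ be a set of primes of Dirichlet density 1 and let χ : ℕ → ℝ be a multiplicative function taking values in {0,1} that is characteristic on S. Define g(z) := P_S(z) − log(1/(z−1)) on {Re z > 1}. Assume that g extends to a continuous function on {Re z ≥ 1} and that the difference quotient φ(z) := (g(z) − g(1))/(z−1), defined for Re z > 1, also extends to a continuous function on {Re z ≥ 1}. Then there exist a real number a > 0 and a function h continuous on {Re z ≥ 1} such that D_χ(z) = a/(z−1) + h(z) for all z with Re z > 1. -/

import Mathlib

/-!
Write `D_χ = ∏_p F_p` as an Euler product. Each `F_p(z) · exp(-χ(p) p^{-z})` is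
`1 + O(p^{-2 Re z})`, so `H(z) = ∏_p F_p(z) exp(-χ(p) p^{-z})` is holomorphic on `Re z > 1/2` and
`D_χ(z) = H(z) exp(P_S(z)) = H(z) e^{g(z)} / (z - 1)` for `Re z > 1`. The hypothesis on `φ` says
that `g`, hence `K = H e^g`, has a continuous difference quotient at `1`, which gives
`D_χ(z) = K(1)/(z - 1) + (K(z) - K(1))/(z - 1)`. Finally `K(1) = lim_{x → 1⁺} (x - 1) D_χ(x) ≥ 0`,
and `K(1) ≠ 0` because no Euler factor vanishes at `1`.
-/

open Filter Topology Complex LSeries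
open scoped ComplexOrder

section Slope

variable {𝕜 : Type*} [NontriviallyNormedField 𝕜]

def HasContinuousSlopeOn (f : 𝕜 → 𝕜) (c : 𝕜) (s t : Set 𝕜) : Prop :=
  ∃ φ : 𝕜 → 𝕜, ContinuousOn φ s ∧ ∀ z ∈ t, f z - f c = (z - c) * φ z

variable {f g : 𝕜 → 𝕜} {c : 𝕜} {s t : Set 𝕜}

theorem DifferentiableAt.hasContinuousSlopeOn (hf : ContinuousOn f s)
    (hfc : DifferentiableAt 𝕜 f c) : HasContinuousSlopeOn f c s t := by
  refine ⟨dslope f c, fun z hz => ?_, fun z _ => by simpa using (sub_smul_dslope f c z).symm⟩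
  rcases eq_or_ne z c with rfl | hzc
  · exact (continuousAt_dslope_same.mpr hfc).continuousWithinAt
  · exact (continuousWithinAt_dslope_of_ne hzc).mpr (hf z hz)

theorem HasContinuousSlopeOn.mul (hf : HasContinuousSlopeOn f c s t)
    (hg : HasContinuousSlopeOn g c s t) (hgs : ContinuousOn g s) :
    HasContinuousSlopeOn (fun z => f z * g z) c s t := by
  obtain ⟨φ, hφ, hfφ⟩ := hf
  obtain ⟨ψ, hψ, hgψ⟩ := hg
  refine ⟨fun z => φ z * g z + f c * ψ z, (hφ.mul hgs).add (continuousOn_const.mul hψ),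
    fun z hz => ?_⟩
  linear_combination g z * hfφ z hz + f c * hgψ z hz

theorem HasContinuousSlopeOn.comp_differentiable {g : 𝕜 → 𝕜} (hg : Differentiable 𝕜 g)
    (hf : HasContinuousSlopeOn f c s t) (hfs : ContinuousOn f s) :
    HasContinuousSlopeOn (fun z => g (f z)) c s t := by
  obtain ⟨φ, hφ, hfφ⟩ := hf
  have hgφ : Continuous (dslope g (f c)) := continuous_iff_continuousAt.mpr fun w => by
    rcases eq_or_ne w (f c) with rfl | hw
    · exact continuousAt_dslope_same.mpr (hg _)
    · exact (continuousAt_dslope_of_ne hw).mpr (hg w).continuousAt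
  refine ⟨fun z => φ z * dslope g (f c) (f z), hφ.mul (hgφ.comp_continuousOn hfs),
    fun z hz => ?_⟩
  have := sub_smul_dslope g (f c) (f z)
  rw [smul_eq_mul] at this
  rw [← this, hfφ z hz]
  ring

theorem HasContinuousSlopeOn.exists_div_sub_eq_div_sub_add (hf : HasContinuousSlopeOn f c s t) :
    ∃ h : 𝕜 → 𝕜, ContinuousOn h s ∧ ∀ z ∈ t, z ≠ c → f z / (z - c) = f c / (z - c) + h z := by
  obtain ⟨φ, hφ, hfφ⟩ := hf
  refine ⟨φ, hφ, fun z hz hzc => ?_⟩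
  rw [div_add' _ _ _ (sub_ne_zero.mpr hzc)]
  congr 1
  linear_combination hfφ z hz

end Slope

lemma norm_one_add_add_mul_exp_neg_sub_one_le {w T : ℂ} (hw : ‖w‖ ≤ 1) :
    ‖(1 + w + T) * exp (-w) - 1‖ ≤ Real.exp 1 * (‖T‖ + ‖w‖ ^ 2) := by
  have hsplit : (1 + w + T) * exp (-w) - 1 = exp (-w) * (T - (exp w - 1 - w)) := by
    have := exp_add (-w) w
    rw [neg_add_cancel, exp_zero] at this
    linear_combination (-1 : ℂ) * this
  rw [hsplit, norm_mul]
  gcongr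
  · exact (norm_exp_le_exp_norm _).trans (Real.exp_le_exp.mpr (by simpa using hw))
  · exact (norm_sub_le _ _).trans (by gcongr; exact norm_exp_sub_one_sub_id_le hw)

noncomputable def eulerFactor (f : ℕ → ℂ) (p : ℕ) (z : ℂ) : ℂ := ∑' e : ℕ, term f z (p ^ e)

section EulerFactor

variable {f : ℕ → ℂ} {p : ℕ} {z : ℂ}

lemma term_mul_of_coprime (hmul : ∀ {m n : ℕ}, m.Coprime n → f (m * n) = f m * f n)
    {m n : ℕ} (hmn : m.Coprime n) : term f z (m * n) = term f z m * term f z n := by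
  rcases eq_or_ne m 0 with rfl | hm
  · simp
  rcases eq_or_ne n 0 with rfl | hn
  · simp
  rw [term_of_ne_zero (mul_ne_zero hm hn), term_of_ne_zero hm, term_of_ne_zero hn, hmul hmn,
    Nat.cast_mul, natCast_mul_natCast_cpow, mul_div_mul_comm]

lemma norm_term_pow_le (hf : ∀ n, ‖f n‖ ≤ 1) (hp : p ≠ 0) (e : ℕ) :
    ‖term f z (p ^ e)‖ ≤ ((p : ℝ) ^ (-z.re)) ^ e := by
  rw [norm_term_eq, if_neg (pow_ne_zero e hp), Nat.cast_pow, ← Real.rpow_natCast,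
    ← Real.rpow_mul (Nat.cast_nonneg p), mul_comm, Real.rpow_mul (Nat.cast_nonneg p),
    Real.rpow_neg (by positivity), Real.rpow_natCast, inv_pow, ← one_div]
  exact div_le_div_of_nonneg_right (hf _) (by positivity)

lemma natCast_rpow_neg_lt_one (hp : 2 ≤ p) {σ : ℝ} (hσ : 0 < σ) : (p : ℝ) ^ (-σ) < 1 :=
  Real.rpow_lt_one_of_one_lt_of_neg (by exact_mod_cast hp) (neg_neg_of_pos hσ)

lemma summable_term_pow (hf : ∀ n, ‖f n‖ ≤ 1) (hp : 2 ≤ p) (hz : 0 < z.re) :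
    Summable fun e => term f z (p ^ e) :=
  .of_norm_bounded (summable_geometric_of_lt_one (by positivity) (natCast_rpow_neg_lt_one hp hz))
    (norm_term_pow_le hf (by omega))

lemma eulerFactor_eq_one_add_add (hf : ∀ n, ‖f n‖ ≤ 1) (hf1 : f 1 = 1) (hp : 2 ≤ p)
    (hz : 0 < z.re) :
    eulerFactor f p z = 1 + term f z p + ∑' e, term f z (p ^ (e + 2)) := by
  have hs := summable_term_pow hf hp hz
  rw [eulerFactor, hs.tsum_eq_zero_add, ((summable_nat_add_iff 1).mpr hs).tsum_eq_zero_add]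
  simp [hf1, add_assoc]

lemma norm_tsum_term_pow_add_two_le (hf : ∀ n, ‖f n‖ ≤ 1) (hp : 2 ≤ p) (hz : 0 < z.re) :
    ‖∑' e, term f z (p ^ (e + 2))‖ ≤ ((p : ℝ) ^ (-z.re)) ^ 2 * (1 - (p : ℝ) ^ (-z.re))⁻¹ := by
  set r := (p : ℝ) ^ (-z.re)
  have hr : r < 1 := natCast_rpow_neg_lt_one hp hz
  have hgeo : Summable fun e : ℕ => r ^ 2 * r ^ e :=
    (summable_geometric_of_lt_one (by positivity) hr).mul_left _
  have hle (e : ℕ) : ‖term f z (p ^ (e + 2))‖ ≤ r ^ 2 * r ^ e :=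
    (norm_term_pow_le hf (by omega) _).trans_eq (by ring)
  calc ‖∑' e, term f z (p ^ (e + 2))‖ ≤ ∑' e : ℕ, r ^ 2 * r ^ e :=
        tsum_of_norm_bounded hgeo.hasSum hle
    _ = r ^ 2 * (1 - r)⁻¹ := by rw [tsum_mul_left, tsum_geometric_of_lt_one (by positivity) hr]

lemma norm_eulerFactor_mul_exp_neg_sub_one_le (hf : ∀ n, ‖f n‖ ≤ 1) (hf1 : f 1 = 1)
    (hp : 2 ≤ p) {σ : ℝ} (hσ : 0 < σ) (hz : σ ≤ z.re) :
    ‖eulerFactor f p z * exp (-term f z p) - 1‖ ≤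
      Real.exp 1 * ((1 - (2 : ℝ) ^ (-σ))⁻¹ + 1) * (p : ℝ) ^ (-(2 * σ)) := by
  set r := (p : ℝ) ^ (-z.re)
  have hr : r ≤ (p : ℝ) ^ (-σ) :=
    Real.rpow_le_rpow_of_exponent_le (by exact_mod_cast (by omega : 1 ≤ p)) (by linarith)
  have hr2 : (p : ℝ) ^ (-σ) ≤ (2 : ℝ) ^ (-σ) :=
    Real.rpow_le_rpow_of_nonpos (by norm_num) (by exact_mod_cast hp) (by linarith)
  have h2 : (2 : ℝ) ^ (-σ) < 1 := natCast_rpow_neg_lt_one le_rfl hσ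
  have hsq : r ^ 2 ≤ (p : ℝ) ^ (-(2 * σ)) := by
    rw [show -(2 * σ) = -σ * ((2 : ℕ) : ℝ) by push_cast; ring,
      Real.rpow_mul_natCast (Nat.cast_nonneg p)]
    gcongr
  have hw : ‖term f z p‖ ≤ r := by simpa using norm_term_pow_le hf (z := z) (by omega) 1
  rw [eulerFactor_eq_one_add_add hf hf1 hp (by linarith)]
  refine (norm_one_add_add_mul_exp_neg_sub_one_le (hw.trans (by linarith))).trans ?_
  have hT := norm_tsum_term_pow_add_two_le hf hp (z := z) (by linarith)
  have hinv : (1 - r)⁻¹ ≤ (1 - (2 : ℝ) ^ (-σ))⁻¹ := by gcongr; linarith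
  rw [mul_assoc]
  gcongr
  calc _ ≤ r ^ 2 * (1 - r)⁻¹ + r ^ 2 := by gcongr
    _ = ((1 - r)⁻¹ + 1) * r ^ 2 := by ring
    _ ≤ _ := by gcongr

lemma differentiableOn_eulerFactor (hf : ∀ n, ‖f n‖ ≤ 1) (hp : 2 ≤ p) {σ : ℝ} (hσ : 0 < σ) :
    DifferentiableOn ℂ (eulerFactor f p) {z | σ < z.re} := by
  refine differentiableOn_tsum_of_summable_norm
    (summable_geometric_of_lt_one (by positivity) (natCast_rpow_neg_lt_one hp hσ))
    (fun e z _ => (hasDerivAt_term f _ z).differentiableAt.differentiableWithinAt)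
    (isOpen_lt continuous_const continuous_re) fun e z hz => ?_
  refine (norm_term_pow_le hf (by omega) e).trans (pow_le_pow_left₀ (by positivity) ?_ e)
  exact Real.rpow_le_rpow_of_exponent_le (by exact_mod_cast (by omega : 1 ≤ p))
    (neg_le_neg (le_of_lt hz))

lemma one_le_eulerFactor (hf : ∀ n, ‖f n‖ ≤ 1) (hf1 : f 1 = 1) (hf0 : 0 ≤ f) (hp : 2 ≤ p)
    {x : ℝ} (hx : 0 < x) : 1 ≤ eulerFactor f p x := by
  have h := (summable_term_pow hf hp (z := x) (by simpa using hx)).le_tsum 0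
    fun e _ => term_nonneg (hf0 _) x
  simpa [eulerFactor, hf1] using h

end EulerFactor

noncomputable def regularizedEulerProduct (f : ℕ → ℂ) (z : ℂ) : ℂ :=
  ∏' p : Nat.Primes, eulerFactor f p z * exp (-term f z p)

section RegularizedEulerProduct

variable {f : ℕ → ℂ}

lemma summable_eulerFactor_majorant {σ : ℝ} (hσ : 1 / 2 < σ) :
    Summable fun p : Nat.Primes =>
      Real.exp 1 * ((1 - (2 : ℝ) ^ (-σ))⁻¹ + 1) * (p : ℝ) ^ (-(2 * σ)) :=
  (Nat.Primes.summable_rpow.mpr (by linarith)).mul_left _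

lemma differentiableOn_regularizedEulerProduct (hf : ∀ n, ‖f n‖ ≤ 1) (hf1 : f 1 = 1) :
    DifferentiableOn ℂ (regularizedEulerProduct f) {z | 1 / 2 < z.re} := by
  intro z hz
  obtain ⟨σ, hσ, hσz⟩ := exists_between (α := ℝ) hz
  set U := {w : ℂ | σ < w.re}
  have hU : IsOpen U := isOpen_lt continuous_const continuous_re
  have hfactor (p : Nat.Primes) :
      DifferentiableOn ℂ (fun w => eulerFactor f p w * exp (-term f w p)) U :=
    (differentiableOn_eulerFactor hf p.prop.two_le (by linarith)).mul
      fun w _ => (hasDerivAt_term f p w).differentiableAt.neg.cexp.differentiableWithinAt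
  have hprod := Summable.hasProdLocallyUniformlyOn_one_add hU (summable_eulerFactor_majorant hσ)
    (.of_forall fun p w hw => norm_eulerFactor_mul_exp_neg_sub_one_le hf hf1 p.prop.two_le
      (by linarith) (le_of_lt hw))
    fun p => ((hfactor p).sub_const 1).continuousOn
  have hdiff := hprod.differentiableOn (.of_forall fun s => by
    simpa [Finset.prod_fn] using DifferentiableOn.finsetProd fun p _ => hfactor p) hU
  refine ((hdiff.differentiableAt (hU.mem_nhds hσz)).congr_of_eventuallyEq
    (.of_forall fun w => ?_)).differentiableWithinAt
  simp [regularizedEulerProduct]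

lemma regularizedEulerProduct_ofReal_ne_zero (hf : ∀ n, ‖f n‖ ≤ 1) (hf1 : f 1 = 1)
    (hf0 : 0 ≤ f) {x : ℝ} (hx : 1 / 2 < x) : regularizedEulerProduct f x ≠ 0 := by
  obtain ⟨σ, hσ, hσx⟩ := exists_between hx
  have hfactor (p : Nat.Primes) : eulerFactor f p x * exp (-term f x p) ≠ 0 :=
    mul_ne_zero (zero_lt_one.trans_le
      (one_le_eulerFactor hf hf1 hf0 p.prop.two_le (by linarith))).ne' (exp_ne_zero _)
  have hsum := (summable_eulerFactor_majorant hσ).of_nonneg_of_le (fun _ => norm_nonneg _)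
    fun p => norm_eulerFactor_mul_exp_neg_sub_one_le hf hf1 p.prop.two_le (z := x)
      (by linarith) (by simpa using hσx.le)
  simpa [regularizedEulerProduct] using
    tprod_one_add_ne_zero_of_summable (by simpa using hfactor) hsum

lemma LSeries_eq_regularizedEulerProduct_mul_exp (hf : ∀ n, ‖f n‖ ≤ 1) (hf1 : f 1 = 1)
    (hmul : ∀ {m n : ℕ}, m.Coprime n → f (m * n) = f m * f n) {z : ℂ} (hz : 1 < z.re) :
    LSeries f z = regularizedEulerProduct f z * exp (∑' p : Nat.Primes, term f z p) := by
  have hsum : Summable fun n => ‖term f z n‖ :=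
    (LSeriesSummable_of_bounded_of_one_lt_re (fun n _ => hf n) hz).norm
  have hE : HasProd (fun p : Nat.Primes => eulerFactor f p z) (LSeries f z) :=
    EulerProduct.eulerProduct_hasProd (by simp [hf1]) (term_mul_of_coprime hmul) hsum
      (term_zero f z)
  have hX : HasProd (fun p : Nat.Primes => exp (-term f z p))
      (exp (-∑' p : Nat.Primes, term f z p)) :=
    (hsum.of_norm.comp_injective Subtype.val_injective).hasSum.neg.cexp
  rw [regularizedEulerProduct, (hE.mul hX).tprod_eq, mul_assoc, ← exp_add, neg_add_cancel,
    exp_zero, mul_one]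

end RegularizedEulerProduct

lemma tsum_mul_cpow_neg_eq_LSeries (f : ℕ → ℂ) {z : ℂ} (hz : z ≠ 0) :
    ∑' n : ℕ, f n * (n : ℂ) ^ (-z) = LSeries f z := by
  refine tsum_congr fun n => ?_
  rcases eq_or_ne n 0 with rfl | hn
  · simp [zero_cpow (neg_ne_zero.mpr hz)]
  · rw [term_of_ne_zero hn, cpow_neg, div_eq_mul_inv]

lemma tsum_primes_term_eq_tsum_cpow {f : ℕ → ℂ} {S : Set ℕ} (hS : ∀ p ∈ S, p.Prime)
    (hfS : ∀ p : ℕ, p.Prime → f p = S.indicator 1 p) (z : ℂ) :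
    ∑' p : Nat.Primes, term f z p = ∑' p : S, (p : ℂ) ^ (-z) := by
  set g := S.indicator fun n : ℕ => (n : ℂ) ^ (-z)
  have hterm (p : Nat.Primes) : term f z p = g p := by
    rw [term_of_ne_zero p.prop.ne_zero, hfS p p.prop]
    by_cases hp : (p : ℕ) ∈ S <;> simp [g, hp, cpow_neg]
  calc ∑' p : Nat.Primes, term f z p = ∑' p : Nat.Primes, g p := tsum_congr hterm
    _ = ∑' n, g n := tsum_subtype_eq_of_support_subset (s := {p : ℕ | p.Prime})
      (Set.support_indicator_subset.trans hS)
    _ = ∑' p : S, (p : ℂ) ^ (-z) := (tsum_subtype S _).symm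

lemma zero_le_of_continuousWithinAt_of_forall_one_lt {K : ℂ → ℂ}
    (hK : ContinuousWithinAt K {z | 1 ≤ z.re} 1) (h : ∀ x : ℝ, 1 < x → 0 ≤ K x) : 0 ≤ K 1 := by
  have hreal : Tendsto (fun x : ℝ => (x : ℂ)) (𝓝[>] 1) (𝓝[{z | 1 ≤ z.re}] 1) :=
    tendsto_nhdsWithin_iff.mpr ⟨(continuous_ofReal.tendsto' 1 1 ofReal_one).mono_left
      nhdsWithin_le_nhds, eventually_nhdsWithin_of_forall fun x hx => by simpa using hx.le⟩
  exact ge_of_tendsto (hK.tendsto.comp hreal) (eventually_nhdsWithin_of_forall h)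

theorem LSeries_eq_div_sub_one_add_of_hasContinuousSlopeOn {f : ℕ → ℂ}
    (hf : ∀ n, ‖f n‖ ≤ 1) (hf0 : 0 ≤ f) (hf1 : f 1 = 1)
    (hmul : ∀ {m n : ℕ}, m.Coprime n → f (m * n) = f m * f n) {G : ℂ → ℂ}
    (hGcont : ContinuousOn G {z | 1 ≤ z.re})
    (hGslope : HasContinuousSlopeOn G 1 {z | 1 ≤ z.re} {z | 1 < z.re})
    (hG : ∀ z : ℂ, 1 < z.re → ∑' p : Nat.Primes, term f z p = G z + log (1 / (z - 1))) :
    ∃ a : ℝ, 0 < a ∧ ∃ h : ℂ → ℂ, ContinuousOn h {z | 1 ≤ z.re} ∧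
      ∀ z : ℂ, 1 < z.re → LSeries f z = a / (z - 1) + h z := by
  have hne (z : ℂ) (hz : 1 < z.re) : z ≠ 1 := fun h => by rw [h, one_re] at hz; exact hz.false
  set K : ℂ → ℂ := fun z => regularizedEulerProduct f z * exp (G z)
  have hLK (z : ℂ) (hz : 1 < z.re) : LSeries f z = K z / (z - 1) := by
    rw [LSeries_eq_regularizedEulerProduct_mul_exp hf hf1 hmul hz, hG z hz, exp_add,
      exp_log (one_div_ne_zero (sub_ne_zero.mpr (hne z hz))), mul_one_div, mul_div_assoc]
  have hH := differentiableOn_regularizedEulerProduct hf hf1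
  have hhalf : {z : ℂ | 1 ≤ z.re} ⊆ {z | 1 / 2 < z.re} := fun z (hz : 1 ≤ z.re) => by
    change 1 / 2 < z.re; linarith
  have hKslope : HasContinuousSlopeOn K 1 {z | 1 ≤ z.re} {z | 1 < z.re} :=
    ((hH.differentiableAt ((isOpen_lt continuous_const continuous_re).mem_nhds
      (by norm_num))).hasContinuousSlopeOn (hH.continuousOn.mono hhalf)).mul
      (hGslope.comp_differentiable differentiable_exp hGcont) hGcont.cexp
  have hK1ne : K 1 ≠ 0 := mul_ne_zero (by
    simpa using regularizedEulerProduct_ofReal_ne_zero hf hf1 hf0 (x := 1) (by norm_num))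
    (exp_ne_zero _)
  have hK1 : 0 < K 1 := by
    refine lt_of_le_of_ne (zero_le_of_continuousWithinAt_of_forall_one_lt
      (((hH.continuousOn.mono hhalf).mul hGcont.cexp) 1 (by simp)) fun x hx => ?_) hK1ne.symm
    have hx' : 1 < (x : ℂ).re := by simpa using hx
    have hLpos : 0 < LSeries f x := ArithmeticFunction.LSeries_positive hf0 (by simp [hf1])
      ((LSeries.abscissaOfAbsConv_le_of_le_const ⟨1, fun n _ => hf n⟩).trans_lt
        (by exact_mod_cast hx))
    rw [(div_eq_iff (sub_ne_zero.mpr (hne x hx'))).mp (hLK x hx').symm]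
    exact mul_nonneg hLpos.le (sub_nonneg.mpr (by exact_mod_cast hx.le))
  obtain ⟨h, hcont, hKh⟩ := hKslope.exists_div_sub_eq_div_sub_add
  refine ⟨(K 1).re, (pos_iff.mp hK1).1, h, hcont, fun z hz => ?_⟩
  rw [hLK z hz, hKh z hz (hne z hz), ← eq_re_of_ofReal_le (r := 0) (by simpa using hK1.le)]

theorem dirichlet_series_simple_pole_of_differentiable_error_general
    (S : Set ℕ) (hS : ∀ p ∈ S, Nat.Prime p)
    (χ : ℕ → ℝ) (hχ1 : χ 1 = 1)
    (hχmul : ∀ m n : ℕ, Nat.Coprime m n → χ (m * n) = χ m * χ n)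
    (hχval : ∀ n : ℕ, χ n = 0 ∨ χ n = 1)
    (hchar : ∀ p : ℕ, Nat.Prime p → (χ p = 1 ↔ p ∈ S))
    (G : ℂ → ℂ) (hGcont : ContinuousOn G {z : ℂ | 1 ≤ z.re})
    (hGeq : ∀ z : ℂ, 1 < z.re →
      G z = (∑' p : S, ((p : ℕ) : ℂ) ^ (-z)) - Complex.log (1 / (z - 1)))
    (Φ : ℂ → ℂ) (hΦcont : ContinuousOn Φ {z : ℂ | 1 ≤ z.re})
    (hΦeq : ∀ z : ℂ, 1 < z.re → Φ z = (G z - G 1) / (z - 1)) :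
    ∃ a : ℝ, 0 < a ∧
      ∃ h : ℂ → ℂ, ContinuousOn h {z : ℂ | 1 ≤ z.re} ∧
        ∀ z : ℂ, 1 < z.re →
          (∑' n : ℕ, (χ n : ℂ) * (n : ℂ) ^ (-z)) = (a : ℂ) / (z - 1) + h z := by
  set f : ℕ → ℂ := fun n => (χ n : ℂ)
  have hf (n : ℕ) : ‖f n‖ ≤ 1 := by rcases hχval n with h | h <;> simp [f, h]
  have hf0 : 0 ≤ f := fun n => by rcases hχval n with h | h <;> simp [f, h]
  have hmul {m n : ℕ} (hmn : m.Coprime n) : f (m * n) = f m * f n := by simp [f, hχmul m n hmn]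
  have hfS (p : ℕ) (hp : p.Prime) : f p = S.indicator 1 p := by
    by_cases hpS : p ∈ S
    · simp [f, hpS, (hchar p hp).mpr hpS]
    · rcases hχval p with h | h
      · simp [f, hpS, h]
      · exact absurd ((hchar p hp).mp h) hpS
  have hGslope : HasContinuousSlopeOn G 1 {z | 1 ≤ z.re} {z | 1 < z.re} :=
    ⟨Φ, hΦcont, fun z hz => by
      rw [hΦeq z hz, mul_div_cancel₀ _ (sub_ne_zero.mpr (ne_of_apply_ne re hz.ne'))]⟩
  obtain ⟨a, ha, h, hcont, hD⟩ := LSeries_eq_div_sub_one_add_of_hasContinuousSlopeOn hf hf0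
    (by simp [f, hχ1]) hmul hGcont hGslope fun z hz => by
      rw [tsum_primes_term_eq_tsum_cpow hS hfS, hGeq z hz, sub_add_cancel]
  refine ⟨a, ha, h, hcont, fun z hz => ?_⟩
  rw [tsum_mul_cpow_neg_eq_LSeries f
    (ne_of_apply_ne re (by rw [zero_re]; exact (zero_lt_one.trans hz).ne')), hD z hz]

/-- Let `S ⊆ ℙ` have Dirichlet density 1 and let `χ` be multiplicative with
values in `{0,1}`, characteristic on `S`. Suppose `g(z) = P_S(z) − log(1/(z−1))` extends to a
continuous function `G` on `{Re z ≥ 1}`, and the difference quotient `(G(z)−G(1))/(z−1)` also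
extends to a continuous function on `{Re z ≥ 1}`. Then there are `a > 0` and `h` continuous on
`{Re z ≥ 1}` such that `D_χ(z) = a/(z−1) + h(z)` for `Re z > 1`. -/
theorem dirichlet_series_simple_pole_of_differentiable_error
    (S : Set ℕ) (hS : ∀ p ∈ S, Nat.Prime p)
    (hdens : Tendsto
      (fun z : ℝ => (∑' p : S, ((p : ℕ) : ℝ) ^ (-z)) / Real.log (1 / (z - 1)))
      (𝓝[>] 1) (𝓝 1))
    (χ : ℕ → ℝ) (hχ1 : χ 1 = 1)
    (hχmul : ∀ m n : ℕ, Nat.Coprime m n → χ (m * n) = χ m * χ n)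
    (hχval : ∀ n : ℕ, χ n = 0 ∨ χ n = 1)
    (hchar : ∀ p : ℕ, Nat.Prime p → (χ p = 1 ↔ p ∈ S))
    (G : ℂ → ℂ) (hGcont : ContinuousOn G {z : ℂ | 1 ≤ z.re})
    (hGeq : ∀ z : ℂ, 1 < z.re →
      G z = (∑' p : S, ((p : ℕ) : ℂ) ^ (-z)) - Complex.log (1 / (z - 1)))
    (Φ : ℂ → ℂ) (hΦcont : ContinuousOn Φ {z : ℂ | 1 ≤ z.re})
    (hΦeq : ∀ z : ℂ, 1 < z.re → Φ z = (G z - G 1) / (z - 1)) :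
    ∃ a : ℝ, 0 < a ∧
      ∃ h : ℂ → ℂ, ContinuousOn h {z : ℂ | 1 ≤ z.re} ∧
        ∀ z : ℂ, 1 < z.re →
          (∑' n : ℕ, (χ n : ℂ) * (n : ℂ) ^ (-z)) = (a : ℂ) / (z - 1) + h z :=
  dirichlet_series_simple_pole_of_differentiable_error_general S hS χ hχ1 hχmul hχval hchar G hGcont
    hGeq Φ hΦcont hΦeq
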